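/- arXiv:1409.4279 — 4 statements merged into one kernel-verified Lean document; each statement's English description precedes it below -/
import Mathlib

section
/- Let A be a real n×p matrix with full column rank p (p < n), let y ∈ ℝⁿ, let z* minimize ‖y − Az‖₂ over z ∈ ℝᵖ, and set r = y − Az*. If r_j ≠ 0 for some index j, then the least-squares residual of the augmented problem is strictly smaller: inf over (z, c) ∈ ℝᵖ × ℝ of ‖y − Az − c·e_j‖₂ < ‖r‖₂. In particular, the norm of the residual produced by the GARD iteration is strictly decreasing. -/
/-! Keeping `z*` and choosing `c = r_j` removes the `j`-th entry of the residual and leaves the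
others unchanged, so the squared norm drops by `r_j ^ 2 > 0`. -/

open Matrix

/-- Euclidean (ℓ₂) norm of a finitely-indexed real vector. -/
noncomputable def norm2 {ι : Type*} [Fintype ι] (v : ι → ℝ) : ℝ :=
  Real.sqrt (∑ i, v i ^ 2)

open Finset

theorem sub_apply_smul_single_one_eq_update {ι R : Type*} [DecidableEq ι] [Ring R]
    (v : ι → R) (j : ι) : v - v j • Pi.single j 1 = Function.update v j 0 := by
  ext i
  rcases eq_or_ne i j with rfl | h <;> simp [*]

theorem sum_sq_update_zero_add_sq {ι R : Type*} [Fintype ι] [DecidableEq ι] [CommRing R]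
    (v : ι → R) (j : ι) : ∑ i, Function.update v j 0 i ^ 2 + v j ^ 2 = ∑ i, v i ^ 2 := by
  rw [← sum_erase_add _ _ (mem_univ j), ← sum_erase_add _ _ (mem_univ j), Function.update_self,
    sum_congr rfl fun i hi ↦ by rw [Function.update_of_ne (ne_of_mem_erase hi)]]
  ring

theorem norm2_update_zero_lt {ι : Type*} [Fintype ι] [DecidableEq ι] {v : ι → ℝ} {j : ι}
    (hv : v j ≠ 0) : norm2 (Function.update v j 0) < norm2 v := by
  refine Real.sqrt_lt_sqrt (by positivity) ?_
  rw [← sum_sq_update_zero_add_sq v j]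
  exact lt_add_of_pos_right _ (by positivity)

theorem stmt1_general {n p : ℕ}
    (A : Matrix (Fin n) (Fin p) ℝ)
    (y : Fin n → ℝ) (zstar : Fin p → ℝ)
    (j : Fin n) (hr : (y - A.mulVec zstar) j ≠ 0) :
    ∃ (z : Fin p → ℝ) (c : ℝ),
      norm2 (y - A.mulVec z - c • (Pi.single j (1 : ℝ) : Fin n → ℝ))
        < norm2 (y - A.mulVec zstar) := by
  refine ⟨zstar, (y - A.mulVec zstar) j, ?_⟩
  rw [sub_apply_smul_single_one_eq_update]
  exact norm2_update_zero_lt hr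

/-- If the least-squares residual `r = y - A z*` has a nonzero `j`-th entry, then the
least-squares residual of the problem augmented with the column `e_j` is strictly smaller:
the infimum over `(z, c)` of `‖y - A z - c e_j‖₂` is strictly below `‖r‖₂`. -/
theorem stmt1 {n p : ℕ} (hpn : p < n)
    (A : Matrix (Fin n) (Fin p) ℝ) (hA : Function.Injective A.mulVec)
    (y : Fin n → ℝ) (zstar : Fin p → ℝ)
    (hmin : ∀ z : Fin p → ℝ, norm2 (y - A.mulVec zstar) ≤ norm2 (y - A.mulVec z))
    (j : Fin n) (hr : (y - A.mulVec zstar) j ≠ 0) :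
    ∃ (z : Fin p → ℝ) (c : ℝ),
      norm2 (y - A.mulVec z - c • (Pi.single j (1 : ℝ) : Fin n → ℝ))
        < norm2 (y - A.mulVec zstar) :=
  stmt1_general A y zstar j hr
end

section
/- Uniqueness of the decomposition: let Q ∈ ℝ^{n×m} have orthonormal columns (QᵀQ = Iₘ), and let δ ∈ [0,1) be a constant such that |⟨Qw, v⟩| ≤ δ ‖Qw‖₂ ‖v‖₂ for every w ∈ ℝᵐ and every 2s-sparse v ∈ ℝⁿ. If Qw₁ + u₁ = Qw₂ + u₂ where u₁, u₂ ∈ ℝⁿ are both at most s-sparse, then w₁ = w₂ and u₁ = u₂. In other words, if δ_{2s} < 1 then a decomposition y = Qw₀ + u₀ with u₀ at most s-sparse is unique. -/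
open Matrix

/-- A vector of `ℝⁿ` is `s`-sparse if it has at most `s` nonzero entries. -/
def Sparse {n : ℕ} (s : ℕ) (v : Fin n → ℝ) : Prop :=
  ∃ T : Finset (Fin n), T.card ≤ s ∧ ∀ i ∉ T, v i = 0

/-- `δ` satisfies the principal-angle bound for `Q` at sparsity level `s`:
`|⟨Qw, v⟩| ≤ δ ‖Qw‖₂ ‖v‖₂` for every `w` and every `s`-sparse `v`. -/
def PABound {n m : ℕ} (Q : Matrix (Fin n) (Fin m) ℝ) (s : ℕ) (δ : ℝ) : Prop :=
  ∀ (w : Fin m → ℝ) (v : Fin n → ℝ), Sparse s v →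
    |Q.mulVec w ⬝ᵥ v| ≤ δ * norm2 (Q.mulVec w) * norm2 v

/-- The `n × |S|` matrix `I_S` whose columns are the standard basis vectors `e_j`, `j ∈ S`. -/
def colSel {n : ℕ} (S : Finset (Fin n)) : Matrix (Fin n) {i // i ∈ S} ℝ :=
  Matrix.of fun i j => if i = (j : Fin n) then 1 else 0

/-- `F_S(a) = I_S I_Sᵀ a`: the vector agreeing with `a` on `S` and zero elsewhere. -/
def restrictVec {n : ℕ} (S : Finset (Fin n)) (a : Fin n → ℝ) : Fin n → ℝ :=
  fun i => if i ∈ S then a i else 0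

lemma norm2_sq {ι : Type*} [Fintype ι] (v : ι → ℝ) : norm2 v ^ 2 = v ⬝ᵥ v := by
  rw [norm2, Real.sq_sqrt (Finset.sum_nonneg fun i _ => sq_nonneg (v i))]
  simp only [dotProduct, sq]

lemma Sparse.sub {n s t : ℕ} {u v : Fin n → ℝ} (hu : Sparse s u) (hv : Sparse t v) :
    Sparse (s + t) (u - v) := by
  obtain ⟨T, hTcard, hT⟩ := hu
  obtain ⟨T', hT'card, hT'⟩ := hv
  refine ⟨T ∪ T', (Finset.card_union_le T T').trans (add_le_add hTcard hT'card), ?_⟩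
  intro i hi
  rw [Finset.mem_union, not_or] at hi
  simp [hT i hi.1, hT' i hi.2]

/-- Pairing `v = Q w` with itself in the bound gives `‖v‖² ≤ δ ‖v‖²`. -/
lemma PABound.eq_zero_of_mulVec_eq {n m s : ℕ} {Q : Matrix (Fin n) (Fin m) ℝ} {δ : ℝ}
    (hPA : PABound Q s δ) (hδ : δ < 1) {w : Fin m → ℝ} {v : Fin n → ℝ}
    (hv : Sparse s v) (hQw : Q *ᵥ w = v) : v = 0 := by
  have hbound := hPA w v hv
  have hnonneg : 0 ≤ v ⬝ᵥ v := norm2_sq v ▸ sq_nonneg _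
  rw [hQw, mul_assoc, ← sq, norm2_sq, abs_of_nonneg hnonneg] at hbound
  have hvv : v ⬝ᵥ v = 0 := le_antisymm (by nlinarith) hnonneg
  exact dotProduct_self_eq_zero.mp hvv

lemma Matrix.mulVec_injective_of_mul_eq_one {R k l : Type*} [Semiring R] [Fintype k] [Fintype l]
    [DecidableEq l] {A : Matrix k l R} {B : Matrix l k R} (hBA : B * A = 1) :
    Function.Injective (A *ᵥ ·) := fun x y h => by
  simpa only [mulVec_mulVec, hBA, one_mulVec] using congrArg (B *ᵥ ·) h

theorem stmt2_general {n m s : ℕ} (Q : Matrix (Fin n) (Fin m) ℝ) (hQ : Qᵀ * Q = 1)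
    (δ : ℝ) (hδ1 : δ < 1) (hPA : PABound Q (2 * s) δ)
    (w₁ w₂ : Fin m → ℝ) (u₁ u₂ : Fin n → ℝ)
    (hu₁ : Sparse s u₁) (hu₂ : Sparse s u₂)
    (heq : Q.mulVec w₁ + u₁ = Q.mulVec w₂ + u₂) :
    w₁ = w₂ ∧ u₁ = u₂ := by
  have hdiff : Q *ᵥ (w₁ - w₂) = u₂ - u₁ := by
    rw [mulVec_sub, sub_eq_sub_iff_add_eq_add, heq, add_comm]
  have hsparse : Sparse (2 * s) (u₂ - u₁) := two_mul s ▸ hu₂.sub hu₁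
  have hu : u₁ = u₂ := (sub_eq_zero.mp (hPA.eq_zero_of_mulVec_eq hδ1 hsparse hdiff)).symm
  refine ⟨mulVec_injective_of_mul_eq_one hQ ?_, hu⟩
  simpa only [hu, add_left_inj] using heq

/-- Uniqueness of the decomposition `y = Qw + u` with `u` at most `s`-sparse, when the
principal-angle constant for sparsity level `2s` satisfies `δ < 1`. -/
theorem stmt2 {n m s : ℕ} (Q : Matrix (Fin n) (Fin m) ℝ) (hQ : Qᵀ * Q = 1)
    (δ : ℝ) (hδ0 : 0 ≤ δ) (hδ1 : δ < 1) (hPA : PABound Q (2 * s) δ)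
    (w₁ w₂ : Fin m → ℝ) (u₁ u₂ : Fin n → ℝ)
    (hu₁ : Sparse s u₁) (hu₂ : Sparse s u₂)
    (heq : Q.mulVec w₁ + u₁ = Q.mulVec w₂ + u₂) :
    w₁ = w₂ ∧ u₁ = u₂ :=
  stmt2_general Q hQ δ hδ1 hPA w₁ w₂ u₁ u₂ hu₁ hu₂ heq
end

section
/- Let Q ∈ ℝ^{n×m} have orthonormal columns (QᵀQ = Iₘ), let δ ∈ [0,1] satisfy the principal-angle bound for sparsity level s, and let S, S′ ⊆ {1,…,n} with |S| ≤ s. Then for every s-sparse vector v ∈ ℝⁿ (whose support need not be contained in S) one has ‖I_Sᵀ Q Qᵀ v‖₂ ≤ δ² ‖v‖₂. -/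
open Matrix

/-! Write `u = Q Qᵀ v`. Since `QᵀQ = I`, `⟨u, u⟩ = ⟨u, v⟩`, so the principal-angle bound applied to
`v` gives `‖u‖ ≤ δ ‖v‖`. The entries of `I_Sᵀ u` are those of the `s`-sparse vector `F_S(u)`, and
`⟨u, F_S(u)⟩ = ‖F_S(u)‖²`, so the bound applied to `F_S(u)` gives `‖F_S(u)‖ ≤ δ ‖u‖`. -/

lemma norm2_nonneg {ι : Type*} [Fintype ι] (v : ι → ℝ) : 0 ≤ norm2 v :=
  Real.sqrt_nonneg _

lemma norm2_le_of_abs_dotProduct_le {ι : Type*} [Fintype ι] {x a : ι → ℝ} {c : ℝ} (hc : 0 ≤ c)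
    (hxa : x ⬝ᵥ a = norm2 x ^ 2) (h : |x ⬝ᵥ a| ≤ c * norm2 x * norm2 a) :
    norm2 x ≤ c * norm2 a := by
  have hx := norm2_nonneg x
  have hsq : norm2 x ^ 2 ≤ c * norm2 a * norm2 x := by
    rw [← hxa, mul_right_comm]
    exact (le_abs_self _).trans h
  rcases hx.eq_or_lt with h0 | hpos
  · rw [← h0]
    exact mul_nonneg hc (norm2_nonneg a)
  · nlinarith

lemma dotProduct_restrictVec {n : ℕ} (S : Finset (Fin n)) (a b : Fin n → ℝ) :
    a ⬝ᵥ restrictVec S b = restrictVec S a ⬝ᵥ restrictVec S b := by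
  refine Finset.sum_congr rfl fun i _ => ?_
  by_cases hi : i ∈ S <;> simp [restrictVec, hi]

lemma sparse_restrictVec {n s : ℕ} {S : Finset (Fin n)} (hS : S.card ≤ s) (a : Fin n → ℝ) :
    Sparse s (restrictVec S a) :=
  ⟨S, hS, fun _ hi => if_neg hi⟩

lemma norm2_colSel_transpose_mulVec {n : ℕ} (S : Finset (Fin n)) (a : Fin n → ℝ) :
    norm2 ((colSel S)ᵀ *ᵥ a) = norm2 (restrictVec S a) := by
  have hentry : ∀ j : {i // i ∈ S}, ((colSel S)ᵀ *ᵥ a) j = a j := by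
    intro j
    simp [mulVec, dotProduct, colSel]
  unfold norm2
  congr 1
  simp only [hentry, restrictVec, ite_pow, zero_pow two_ne_zero, Finset.sum_ite_mem,
    Finset.univ_inter]
  exact Finset.sum_coe_sort S fun i => a i ^ 2

lemma mulVec_dotProduct_mulVec_of_transpose_mul_self {n m : ℕ} {Q : Matrix (Fin n) (Fin m) ℝ}
    (hQ : Qᵀ * Q = 1) (w w' : Fin m → ℝ) : Q *ᵥ w ⬝ᵥ Q *ᵥ w' = w ⬝ᵥ w' := by
  rw [dotProduct_comm, dotProduct_mulVec, ← mulVec_transpose, mulVec_mulVec, hQ, one_mulVec,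
    dotProduct_comm]

section PABound

variable {n m s : ℕ} {Q : Matrix (Fin n) (Fin m) ℝ} {δ : ℝ}

lemma PABound.norm2_mulVec_transpose_mulVec_le (hPA : PABound Q s δ) (hδ : 0 ≤ δ)
    (hQ : Qᵀ * Q = 1) {v : Fin n → ℝ} (hv : Sparse s v) :
    norm2 (Q *ᵥ Qᵀ *ᵥ v) ≤ δ * norm2 v := by
  have hdot : Q *ᵥ Qᵀ *ᵥ v ⬝ᵥ v = norm2 (Q *ᵥ Qᵀ *ᵥ v) ^ 2 := by
    rw [norm2_sq, mulVec_dotProduct_mulVec_of_transpose_mul_self hQ, dotProduct_transpose_mulVec,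
      dotProduct_comm]
  exact norm2_le_of_abs_dotProduct_le hδ hdot (hPA _ v hv)

lemma PABound.norm2_restrictVec_mulVec_le (hPA : PABound Q s δ) (hδ : 0 ≤ δ)
    {S : Finset (Fin n)} (hS : S.card ≤ s) (w : Fin m → ℝ) :
    norm2 (restrictVec S (Q *ᵥ w)) ≤ δ * norm2 (Q *ᵥ w) := by
  have hdot : restrictVec S (Q *ᵥ w) ⬝ᵥ Q *ᵥ w = norm2 (restrictVec S (Q *ᵥ w)) ^ 2 := by
    rw [norm2_sq, dotProduct_comm, dotProduct_restrictVec]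
  refine norm2_le_of_abs_dotProduct_le hδ hdot ?_
  rw [dotProduct_comm, mul_right_comm]
  exact hPA w _ (sparse_restrictVec hS _)

end PABound

theorem stmt5_general {n m s : ℕ} (Q : Matrix (Fin n) (Fin m) ℝ) (hQ : Qᵀ * Q = 1)
    (δ : ℝ) (hδ0 : 0 ≤ δ) (hPA : PABound Q s δ)
    (S : Finset (Fin n)) (hcard : S.card ≤ s) :
    ∀ v : Fin n → ℝ, Sparse s v →
      norm2 ((colSel S)ᵀ.mulVec (Q.mulVec (Qᵀ.mulVec v))) ≤ δ ^ 2 * norm2 v := by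
  intro v hv
  calc norm2 ((colSel S)ᵀ *ᵥ Q *ᵥ Qᵀ *ᵥ v) = norm2 (restrictVec S (Q *ᵥ Qᵀ *ᵥ v)) :=
        norm2_colSel_transpose_mulVec S _
    _ ≤ δ * norm2 (Q *ᵥ Qᵀ *ᵥ v) := hPA.norm2_restrictVec_mulVec_le hδ0 hcard _
    _ ≤ δ * (δ * norm2 v) :=
        mul_le_mul_of_nonneg_left (hPA.norm2_mulVec_transpose_mulVec_le hδ0 hQ hv) hδ0
    _ = δ ^ 2 * norm2 v := by ring

/-- For any index sets `S, S'` with `|S| ≤ s` and any `s`-sparse vector `v` (whose support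
need not be contained in `S`), one has `‖I_Sᵀ Q Qᵀ v‖₂ ≤ δ² ‖v‖₂`. -/
theorem stmt5 {n m s : ℕ} (Q : Matrix (Fin n) (Fin m) ℝ) (hQ : Qᵀ * Q = 1)
    (δ : ℝ) (hδ0 : 0 ≤ δ) (hδ1 : δ ≤ 1) (hPA : PABound Q s δ)
    (S S' : Finset (Fin n)) (hcard : S.card ≤ s) :
    ∀ v : Fin n → ℝ, Sparse s v →
      norm2 ((colSel S)ᵀ.mulVec (Q.mulVec (Qᵀ.mulVec v))) ≤ δ ^ 2 * norm2 v :=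
  stmt5_general Q hQ δ hδ0 hPA S hcard
end

section
/- Residual formula at the k-th GARD step (noiseless case): let Q ∈ ℝ^{n×m} have orthonormal columns (QᵀQ = Iₘ), y = Qw₀ + u₀ with supp(u₀) = S, and let S_k ⊆ S be a set of k ≥ 1 indices such that M_k = I_k − I_{S_k}ᵀ Q Qᵀ I_{S_k} is invertible. Then the matrix Φ_k = [Q I_{S_k}] has full column rank, and for the (unique) minimizer z* of ‖y − Φ_k z‖₂ the residual satisfies y − Φ_k z* = v_k − Q Qᵀ v_k, where v_k = F_{S∖S_k}(u₀) + I_{S_k} M_k⁻¹ I_{S_k}ᵀ Q Qᵀ F_{S∖S_k}(u₀). -/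
open Matrix

/-! With `A = I_{S_k}` and `r = v_k - QQᵀv_k`, we have `Qᵀr = 0` because `QᵀQ = 1`, and `Aᵀr = 0`
because `AᵀA = 1` and the correction term `A M_k⁻¹ AᵀQQᵀ F_{S∖S_k}(u₀)` of `v_k` is built to cancel
`AᵀQQᵀv_k`. So `r` is orthogonal to the columns of `Φ_k = [Q A]`, while `y - r` lies in their span
since `u₀ = F_{S_k}(u₀) + F_{S∖S_k}(u₀)`; by Pythagoras `r` is then the residual of every
least-squares solution. Full column rank holds because the Gram matrix
`Φ_kᵀΦ_k = [1, QᵀA; AᵀQ, 1]` has Schur complement `M_k`. -/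

section colSel

variable {n : ℕ}

lemma colSel_transpose_mulVec (S : Finset (Fin n)) (x : Fin n → ℝ) :
    (colSel S)ᵀ *ᵥ x = fun j => x j.1 := by
  funext j
  simp [mulVec, dotProduct, colSel]

lemma colSel_mulVec (S : Finset (Fin n)) (c : S → ℝ) :
    colSel S *ᵥ c = fun i => if h : i ∈ S then c ⟨i, h⟩ else 0 := by
  funext i
  split_ifs with h
  · simp only [mulVec, dotProduct, colSel, of_apply, ite_mul, one_mul, zero_mul]
    rw [Fintype.sum_eq_single ⟨i, h⟩ fun j hj => if_neg fun hij => hj (Subtype.ext hij.symm)]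
    simp
  · simp only [mulVec, dotProduct, colSel, of_apply, ite_mul, one_mul, zero_mul]
    exact Finset.sum_eq_zero fun j _ => if_neg fun hij : i = j => h (hij ▸ j.2)

lemma colSel_transpose_mul_colSel (S : Finset (Fin n)) : (colSel S)ᵀ * colSel S = 1 := by
  ext i j
  simp only [mul_apply, colSel, transpose_apply, of_apply, one_apply, ite_mul, one_mul, zero_mul]
  rw [Finset.sum_ite_eq', if_pos (Finset.mem_univ _)]
  exact if_congr Subtype.ext_iff.symm rfl rfl

lemma colSel_mulVec_transpose_mulVec (S : Finset (Fin n)) (x : Fin n → ℝ) :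
    colSel S *ᵥ ((colSel S)ᵀ *ᵥ x) = restrictVec S x := by
  rw [colSel_transpose_mulVec, colSel_mulVec]
  funext i
  by_cases h : i ∈ S <;> simp [restrictVec, h]

lemma restrictVec_add_restrictVec_sdiff (S T : Finset (Fin n)) {a : Fin n → ℝ}
    (ha : ∀ i ∉ S, a i = 0) : restrictVec T a + restrictVec (S \ T) a = a := by
  funext i
  by_cases hiT : i ∈ T
  · simp [restrictVec, hiT]
  · by_cases hiS : i ∈ S <;> simp [restrictVec, hiT, hiS, ha]

lemma colSel_transpose_mulVec_restrictVec_sdiff (S T : Finset (Fin n)) (a : Fin n → ℝ) :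
    (colSel T)ᵀ *ᵥ restrictVec (S \ T) a = 0 := by
  funext j
  simp only [colSel_transpose_mulVec, restrictVec, Finset.mem_sdiff, j.2, not_true, and_false,
    if_false, Pi.zero_apply]

end colSel

section LeastSquares

variable {ι κ : Type*} [Fintype ι] [Fintype κ]

lemma norm2_eq_sqrt_dotProduct (v : ι → ℝ) : norm2 v = √(v ⬝ᵥ v) := by
  simp only [norm2, dotProduct, sq]

lemma dotProduct_mulVec_eq_zero_of_transpose_mulVec_eq_zero {Φ : Matrix ι κ ℝ} {r : ι → ℝ}
    (hr : Φᵀ *ᵥ r = 0) (z : κ → ℝ) : r ⬝ᵥ Φ *ᵥ z = 0 := by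
  rw [dotProduct_mulVec, ← mulVec_transpose, hr, zero_dotProduct]

lemma sub_mulVec_eq_of_norm2_sub_mulVec_le (Φ : Matrix ι κ ℝ) {y r : ι → ℝ} {z₀ z : κ → ℝ}
    (hr : Φᵀ *ᵥ r = 0) (hz₀ : y - Φ *ᵥ z₀ = r)
    (hz : norm2 (y - Φ *ᵥ z) ≤ norm2 (y - Φ *ᵥ z₀)) : y - Φ *ᵥ z = r := by
  set d := Φ *ᵥ (z₀ - z) with hd
  have hsplit : y - Φ *ᵥ z = r + d := by
    rw [← hz₀, hd, mulVec_sub]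
    abel
  have hrd : r ⬝ᵥ d = 0 := dotProduct_mulVec_eq_zero_of_transpose_mulVec_eq_zero hr _
  have hnonneg (v : ι → ℝ) : 0 ≤ v ⬝ᵥ v := by simpa using dotProduct_self_star_nonneg v
  have hpyth : (r + d) ⬝ᵥ (r + d) = r ⬝ᵥ r + d ⬝ᵥ d := by
    rw [add_dotProduct, dotProduct_add, dotProduct_add, dotProduct_comm d r, hrd]
    ring
  rw [hsplit, hz₀, norm2_eq_sqrt_dotProduct, norm2_eq_sqrt_dotProduct,
    Real.sqrt_le_sqrt_iff (hnonneg r), hpyth] at hz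
  have hd : d ⬝ᵥ d = 0 := le_antisymm (by linarith [hnonneg d]) (hnonneg d)
  rw [hsplit, dotProduct_self_eq_zero.mp hd, add_zero]

end LeastSquares

section BlockColumns

variable {K : Type*} [Field K] {ι μ κ : Type*} [Fintype ι] [Fintype μ] [Fintype κ]
  [DecidableEq μ] [DecidableEq κ] (Q : Matrix ι μ K) (A : Matrix ι κ K)

lemma mulVec_fromCols_injective (hQ : Qᵀ * Q = 1) (hA : Aᵀ * A = 1)
    (hM : IsUnit (1 - Aᵀ * Q * Qᵀ * A)) : Function.Injective (fromCols Q A).mulVec := by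
  have hGram : IsUnit ((fromCols Q A)ᵀ * fromCols Q A) := by
    rw [isUnit_iff_isUnit_det, transpose_fromCols, fromRows_mul_fromCols, hQ, hA,
      det_fromBlocks_one₁₁, ← isUnit_iff_isUnit_det]
    simpa only [Matrix.mul_assoc] using hM
  refine Function.Injective.of_comp (f := ((fromCols Q A)ᵀ).mulVec) ?_
  simpa only [Function.comp_def, mulVec_mulVec] using mulVec_injective_iff_isUnit.mpr hGram

lemma transpose_fromCols_mulVec_sub_mulVec_eq_zero (hQ : Qᵀ * Q = 1) (hA : Aᵀ * A = 1)
    {M : Matrix κ κ K} (hMdef : M = 1 - Aᵀ * Q * Qᵀ * A) (hM : IsUnit M)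
    {u : ι → K} (hu : Aᵀ *ᵥ u = 0) {v : ι → K}
    (hv : v = u + A *ᵥ (M⁻¹ *ᵥ (Aᵀ *ᵥ (Q *ᵥ (Qᵀ *ᵥ u))))) :
    (fromCols Q A)ᵀ *ᵥ (v - Q *ᵥ (Qᵀ *ᵥ v)) = 0 := by
  set g := M⁻¹ *ᵥ (Aᵀ *ᵥ (Q *ᵥ (Qᵀ *ᵥ u)))
  have hQv : Qᵀ *ᵥ (Q *ᵥ (Qᵀ *ᵥ v)) = Qᵀ *ᵥ v := by
    rw [mulVec_mulVec, hQ, one_mulVec]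
  have hAv : Aᵀ *ᵥ v = g := by
    rw [hv, mulVec_add, hu, mulVec_mulVec, hA, one_mulVec, zero_add]
  have hAQQv : Aᵀ *ᵥ (Q *ᵥ (Qᵀ *ᵥ v)) = g := by
    have hAQQA : Aᵀ *ᵥ (Q *ᵥ (Qᵀ *ᵥ (A *ᵥ g))) = g - M *ᵥ g := by
      simp only [mulVec_mulVec, Matrix.mul_assoc, hMdef, sub_mulVec, one_mulVec, sub_sub_cancel]
    have hMg : M *ᵥ g = Aᵀ *ᵥ (Q *ᵥ (Qᵀ *ᵥ u)) := by
      rw [mulVec_mulVec, mul_nonsing_inv _ ((isUnit_iff_isUnit_det M).mp hM), one_mulVec]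
    rw [hv, mulVec_add, mulVec_add, mulVec_add, hAQQA, hMg]
    abel
  rw [transpose_fromCols, fromRows_mulVec, mulVec_sub, mulVec_sub, hQv, hAv, hAQQv, sub_self,
    sub_self, Sum.elim_zero_zero]

end BlockColumns

theorem stmt11_general {n m : ℕ} (Q : Matrix (Fin n) (Fin m) ℝ) (hQ : Qᵀ * Q = 1)
    (w₀ : Fin m → ℝ) (u₀ : Fin n → ℝ) (S : Finset (Fin n))
    (hsupp : ∀ i, i ∈ S ↔ u₀ i ≠ 0)
    (y : Fin n → ℝ) (hy : y = Q.mulVec w₀ + u₀)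
    (Sk : Finset (Fin n))
    (Mk : Matrix {i // i ∈ Sk} {i // i ∈ Sk} ℝ)
    (hMk : Mk = 1 - (colSel Sk)ᵀ * Q * Qᵀ * colSel Sk) (hMkInv : IsUnit Mk)
    (Φk : Matrix (Fin n) (Fin m ⊕ {i // i ∈ Sk}) ℝ)
    (hΦk : Φk = Matrix.fromCols Q (colSel Sk))
    (vk : Fin n → ℝ)
    (hvk : vk = restrictVec (S \ Sk) u₀ +
      (colSel Sk).mulVec ((Mk⁻¹).mulVec
        ((colSel Sk)ᵀ.mulVec (Q.mulVec (Qᵀ.mulVec (restrictVec (S \ Sk) u₀)))))) :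
    Function.Injective Φk.mulVec ∧
      ∀ zstar : Fin m ⊕ {i // i ∈ Sk} → ℝ,
        (∀ z, norm2 (y - Φk.mulVec zstar) ≤ norm2 (y - Φk.mulVec z)) →
          y - Φk.mulVec zstar = vk - Q.mulVec (Qᵀ.mulVec vk) := by
  subst hΦk
  have hA := colSel_transpose_mul_colSel Sk
  refine ⟨mulVec_fromCols_injective Q _ hQ hA (hMk ▸ hMkInv), fun zstar hmin => ?_⟩
  have hr := transpose_fromCols_mulVec_sub_mulVec_eq_zero Q _ hQ hA hMk hMkInv
    (colSel_transpose_mulVec_restrictVec_sdiff S Sk u₀) hvk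
  set g := Mk⁻¹ *ᵥ ((colSel Sk)ᵀ *ᵥ (Q *ᵥ (Qᵀ *ᵥ restrictVec (S \ Sk) u₀)))
  have hu₀ : restrictVec Sk u₀ + restrictVec (S \ Sk) u₀ = u₀ :=
    restrictVec_add_restrictVec_sdiff S Sk fun i hi => by_contra fun h => hi ((hsupp i).mpr h)
  refine sub_mulVec_eq_of_norm2_sub_mulVec_le _ hr ?_
    (hmin (Sum.elim (w₀ + Qᵀ *ᵥ vk) ((colSel Sk)ᵀ *ᵥ u₀ - g)))
  rw [fromCols_mulVec_sumElim, mulVec_add, mulVec_sub, colSel_mulVec_transpose_mulVec, hy]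
  linear_combination -hu₀ - hvk

/-- Residual formula at the `k`-th GARD step (noiseless case): for `S_k ⊆ S` nonempty with
`M_k = I_k − I_{S_k}ᵀ Q Qᵀ I_{S_k}` invertible, the matrix `Φ_k = [Q I_{S_k}]` has full
column rank and the least-squares residual equals `v_k − Q Qᵀ v_k`, where
`v_k = F_{S∖S_k}(u₀) + I_{S_k} M_k⁻¹ I_{S_k}ᵀ Q Qᵀ F_{S∖S_k}(u₀)`. -/
theorem stmt11 {n m : ℕ} (Q : Matrix (Fin n) (Fin m) ℝ) (hQ : Qᵀ * Q = 1)
    (w₀ : Fin m → ℝ) (u₀ : Fin n → ℝ) (S : Finset (Fin n))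
    (hsupp : ∀ i, i ∈ S ↔ u₀ i ≠ 0)
    (y : Fin n → ℝ) (hy : y = Q.mulVec w₀ + u₀)
    (Sk : Finset (Fin n)) (hSkS : Sk ⊆ S) (hSkne : Sk.Nonempty)
    (Mk : Matrix {i // i ∈ Sk} {i // i ∈ Sk} ℝ)
    (hMk : Mk = 1 - (colSel Sk)ᵀ * Q * Qᵀ * colSel Sk) (hMkInv : IsUnit Mk)
    (Φk : Matrix (Fin n) (Fin m ⊕ {i // i ∈ Sk}) ℝ)
    (hΦk : Φk = Matrix.fromCols Q (colSel Sk))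
    (vk : Fin n → ℝ)
    (hvk : vk = restrictVec (S \ Sk) u₀ +
      (colSel Sk).mulVec ((Mk⁻¹).mulVec
        ((colSel Sk)ᵀ.mulVec (Q.mulVec (Qᵀ.mulVec (restrictVec (S \ Sk) u₀)))))) :
    Function.Injective Φk.mulVec ∧
      ∀ zstar : Fin m ⊕ {i // i ∈ Sk} → ℝ,
        (∀ z, norm2 (y - Φk.mulVec zstar) ≤ norm2 (y - Φk.mulVec z)) →
          y - Φk.mulVec zstar = vk - Q.mulVec (Qᵀ.mulVec vk) :=
  stmt11_general Q hQ w₀ u₀ S hsupp y hy Sk Mk hMk hMkInv Φk hΦk vk hvk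
end
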